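/- If z is a complex number with 0 < Re(z) < 1 and ζ(z) = 0, then ∑_{n=1}^∞ (-1)^(n-1)/n^(conj(z)) = ∑_{n=1}^∞ (-1)^(n-1)/n^(1-z). -/

import Mathlib

/-!
The alternating series `η(s) = ∑ (-1)^n (n+1)^(-s)` converges for `0 < re s`: grouping consecutive
terms, each pair is `(2k+1)^(-s) - (2k+2)^(-s)`, of size at most `|s| (k+1)^(-re s - 1)` by the
mean value theorem, so the grouped series converges absolutely and locally uniformly; its sum is
therefore holomorphic on `0 < re s`. For `1 < re s` splitting into even and odd terms gives
`η(s) = (1 - 2^(1-s)) ζ(s)`, and the identity theorem, applied after multiplying by `s - 1` to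
remove the pole of `ζ`, extends this to `0 < re s`, `s ≠ 1`. Hence the series sums to `0` at every
zero of `ζ` with `0 < re s`; both `conj z` and `1 - z` are such zeros, by `ζ(conj s) = conj ζ(s)`
and the functional equation.
-/

open Filter Finset Complex Topology

theorem Filter.Tendsto.of_comp_two_mul_of_comp_two_mul_add_one {X : Type*} {u : ℕ → X}
    {l : Filter X} (h₀ : Tendsto (fun k => u (2 * k)) atTop l)
    (h₁ : Tendsto (fun k => u (2 * k + 1)) atTop l) : Tendsto u atTop l := by
  intro s hs
  obtain ⟨a, ha⟩ := eventually_atTop.1 (h₀ hs)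
  obtain ⟨b, hb⟩ := eventually_atTop.1 (h₁ hs)
  refine eventually_atTop.2 ⟨2 * (a + b), fun n hn => ?_⟩
  obtain ⟨k, rfl | rfl⟩ := Nat.even_or_odd' n
  · exact ha k (by omega)
  · exact hb k (by omega)

theorem Finset.sum_range_two_mul {M : Type*} [AddCommMonoid M] (f : ℕ → M) (N : ℕ) :
    ∑ n ∈ range (2 * N), f n = ∑ k ∈ range N, (f (2 * k) + f (2 * k + 1)) := by
  induction N with
  | zero => simp
  | succ N ih => rw [Nat.mul_succ, sum_range_succ, sum_range_succ, ih, sum_range_succ, add_assoc]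

theorem HasSum.tendsto_sum_range_of_pairs {M : Type*} [AddCommMonoid M] [TopologicalSpace M]
    [ContinuousAdd M] {f : ℕ → M} {L : M} (h : HasSum (fun k => f (2 * k) + f (2 * k + 1)) L)
    (hf : Tendsto f atTop (𝓝 0)) : Tendsto (fun N => ∑ n ∈ range N, f n) atTop (𝓝 L) := by
  have heven : Tendsto (fun k => ∑ n ∈ range (2 * k), f n) atTop (𝓝 L) := by
    simpa only [sum_range_two_mul] using h.tendsto_sum_nat
  have htwo : Tendsto (fun k : ℕ => 2 * k) atTop atTop :=
    tendsto_atTop_mono (fun k => Nat.le_mul_of_pos_left k two_pos) tendsto_id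
  refine heven.of_comp_two_mul_of_comp_two_mul_add_one ?_
  simpa only [sum_range_succ, add_zero, Function.comp_apply] using heven.add (hf.comp htwo)

theorem summable_nat_add_one_rpow {p : ℝ} (hp : p < -1) :
    Summable (fun k : ℕ => ((k : ℝ) + 1) ^ p) := by
  simpa using (summable_nat_add_iff 1).2 (Real.summable_nat_rpow.2 hp)

theorem norm_ofReal_cpow_neg_sub_le {s : ℂ} (hs : -1 ≤ s.re) {a b : ℝ} (ha : 0 < a)
    (hab : a ≤ b) : ‖(a : ℂ) ^ (-s) - (b : ℂ) ^ (-s)‖ ≤ ‖s‖ * a ^ (-s.re - 1) * (b - a) := by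
  have hderiv : ∀ x ∈ Set.Icc a b, HasDerivWithinAt (fun y : ℝ => (y : ℂ) ^ (-s))
      (-s * (x : ℂ) ^ (-s - 1)) (Set.Icc a b) x := fun x hx =>
    ((hasDerivAt_id (x : ℂ)).cpow_const (ofReal_mem_slitPlane.2 (ha.trans_le hx.1))).comp_ofReal
      |>.hasDerivWithinAt |>.congr_deriv (by simp)
  have hbound : ∀ x ∈ Set.Icc a b, ‖-s * (x : ℂ) ^ (-s - 1)‖ ≤ ‖s‖ * a ^ (-s.re - 1) := by
    intro x hx
    rw [norm_mul, norm_neg, norm_cpow_eq_rpow_re_of_pos (ha.trans_le hx.1)]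
    gcongr
    exact Real.rpow_le_rpow_of_nonpos ha hx.1 (by simp only [sub_re, neg_re, one_re]; linarith)
  simpa [norm_sub_rev, Real.norm_of_nonneg (sub_nonneg.2 hab)] using
    (convex_Icc a b).norm_image_sub_le_of_norm_hasDerivWithin_le hderiv hbound
      (Set.left_mem_Icc.2 hab) (Set.right_mem_Icc.2 hab)

noncomputable section

def etaTerm (s : ℂ) (n : ℕ) : ℂ := (-1) ^ n / ((n : ℂ) + 1) ^ s

def etaPair (s : ℂ) (k : ℕ) : ℂ := etaTerm s (2 * k) + etaTerm s (2 * k + 1)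

/-- Summing consecutive pairs makes the series absolutely convergent on all of `0 < re s`. -/
def dirichletEta (s : ℂ) : ℂ := ∑' k, etaPair s k

variable {s : ℂ}

theorem norm_etaTerm (s : ℂ) (n : ℕ) : ‖etaTerm s n‖ = ((n : ℝ) + 1) ^ (-s.re) := by
  rw [etaTerm, norm_div, norm_pow, norm_neg, norm_one, one_pow, ← Nat.cast_add_one,
    norm_natCast_cpow_of_pos n.succ_pos, Real.rpow_neg (by positivity), one_div, Nat.cast_add_one]

theorem tendsto_etaTerm (hs : 0 < s.re) : Tendsto (etaTerm s) atTop (𝓝 0) := by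
  refine squeeze_zero_norm (fun n => (norm_etaTerm s n).le) ?_
  exact (tendsto_rpow_neg_atTop hs).comp
    (tendsto_atTop_add_const_right _ 1 tendsto_natCast_atTop_atTop)

theorem etaPair_eq (s : ℂ) (k : ℕ) :
    etaPair s k = ((2 * k + 1 : ℝ) : ℂ) ^ (-s) - ((2 * k + 2 : ℝ) : ℂ) ^ (-s) := by
  simp only [etaPair, etaTerm, pow_add, pow_mul, neg_one_sq, one_pow, pow_one, cpow_neg]
  push_cast
  rw [add_assoc, one_add_one_eq_two]
  ring

theorem norm_etaPair_le (hs : 0 < s.re) (k : ℕ) :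
    ‖etaPair s k‖ ≤ ‖s‖ * ((k : ℝ) + 1) ^ (-s.re - 1) := by
  have hk : (0 : ℝ) < 2 * k + 1 := by positivity
  calc ‖etaPair s k‖ ≤ ‖s‖ * (2 * k + 1 : ℝ) ^ (-s.re - 1) * ((2 * k + 2) - (2 * k + 1)) := by
        rw [etaPair_eq]; exact norm_ofReal_cpow_neg_sub_le (by linarith) hk (by linarith)
    _ ≤ ‖s‖ * ((k : ℝ) + 1) ^ (-s.re - 1) := by
        rw [show (2 * k + 2 : ℝ) - (2 * k + 1) = 1 by ring, mul_one]
        refine mul_le_mul_of_nonneg_left ?_ (norm_nonneg s)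
        exact Real.rpow_le_rpow_of_nonpos (by positivity) (by linarith [k.cast_nonneg (α := ℝ)])
          (by linarith)

theorem summable_etaPair (hs : 0 < s.re) : Summable (etaPair s) :=
  .of_norm_bounded ((summable_nat_add_one_rpow (by linarith)).mul_left ‖s‖) (norm_etaPair_le hs)

theorem tendsto_sum_etaTerm (hs : 0 < s.re) :
    Tendsto (fun N => ∑ n ∈ range N, etaTerm s n) atTop (𝓝 (dirichletEta s)) :=
  (summable_etaPair hs).hasSum.tendsto_sum_range_of_pairs (tendsto_etaTerm hs)

theorem differentiable_etaPair (k : ℕ) : Differentiable ℂ (etaPair · k) := by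
  have hterm (n : ℕ) : Differentiable ℂ (etaTerm · n) := by
    have hn : ((n : ℂ) + 1) ≠ 0 := by exact_mod_cast n.succ_ne_zero
    exact (differentiable_const _).div (differentiable_id.const_cpow (.inl hn))
      fun s => cpow_ne_zero_iff.2 (.inl hn)
  exact (hterm _).add (hterm _)

theorem differentiableOn_dirichletEta : DifferentiableOn ℂ dirichletEta {s | 0 < s.re} := by
  intro s₀ (hs₀ : 0 < s₀.re)
  set U := {s : ℂ | s₀.re / 2 < s.re} ∩ Metric.ball 0 (‖s₀‖ + 1)
  have hU : IsOpen U := (isOpen_lt continuous_const continuous_re).inter Metric.isOpen_ball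
  have hs₀U : s₀ ∈ U := ⟨show s₀.re / 2 < s₀.re by linarith, by simp⟩
  have hdiff : DifferentiableOn ℂ dirichletEta U := by
    refine differentiableOn_tsum_of_summable_norm
      ((summable_nat_add_one_rpow (p := -(s₀.re / 2) - 1) (by linarith)).mul_left (‖s₀‖ + 1))
      (fun k => (differentiable_etaPair k).differentiableOn) hU
      fun k s ⟨(hσ : s₀.re / 2 < s.re), hR⟩ => ?_
    rw [mem_ball_zero_iff] at hR
    refine (norm_etaPair_le (by linarith) k).trans
      (mul_le_mul hR.le ?_ (by positivity) (by positivity))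
    exact Real.rpow_le_rpow_of_exponent_le (by simp) (by linarith)
  exact (hdiff.differentiableAt (hU.mem_nhds hs₀U)).differentiableWithinAt

theorem dirichletEta_eq_of_one_lt (hs : 1 < s.re) :
    dirichletEta s = (1 - 2 ^ (1 - s)) * riemannZeta s := by
  set b : ℕ → ℂ := fun n => 1 / ((n : ℂ) + 1) ^ s
  have hb : Summable b := by
    simpa [b] using (summable_nat_add_iff 1).2 (Complex.summable_one_div_nat_cpow.2 hs)
  have hbe : Summable (fun k => b (2 * k)) := hb.comp_injective (mul_right_injective₀ two_ne_zero)
  have hbo : Summable (fun k => b (2 * k + 1)) :=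
    hb.comp_injective ((add_left_injective 1).comp (mul_right_injective₀ two_ne_zero))
  have hodd (k : ℕ) : b (2 * k + 1) = 2 ^ (-s) * b k := by
    have : ((2 * k + 1 : ℕ) : ℂ) + 1 = (2 : ℕ) * ((k + 1 : ℕ) : ℂ) := by push_cast; ring
    simp only [b, this, natCast_mul_natCast_cpow, cpow_neg]
    push_cast
    ring
  have hpair (k : ℕ) : etaPair s k = b (2 * k) - b (2 * k + 1) := by
    simp [etaPair, etaTerm, b, pow_add, pow_mul, sub_eq_add_neg, neg_div]
  have hζ : ∑' n, b n = riemannZeta s := (zeta_eq_tsum_one_div_nat_add_one_cpow hs).symm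
  have hodd_sum : ∑' k, b (2 * k + 1) = 2 ^ (-s) * riemannZeta s := by
    rw [tsum_congr hodd, tsum_mul_left, hζ]
  have h2 : (2 : ℂ) ^ (1 - s) = 2 * 2 ^ (-s) := by
    rw [sub_eq_add_neg, cpow_add _ _ two_ne_zero, cpow_one]
  rw [dirichletEta, tsum_congr hpair, hbe.tsum_sub hbo, h2]
  linear_combination (tsum_even_add_odd hbe hbo).trans hζ - 2 * hodd_sum

theorem dirichletEta_eq (hs : 0 < s.re) (hs₁ : s ≠ 1) :
    dirichletEta s = (1 - 2 ^ (1 - s)) * riemannZeta s := by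
  have hU : IsOpen {s : ℂ | 0 < s.re} := isOpen_lt continuous_const continuous_re
  have hF : AnalyticOnNhd ℂ (fun s => (s - 1) * dirichletEta s) {s | 0 < s.re} :=
    ((differentiableOn_id.sub_const 1).mul differentiableOn_dirichletEta).analyticOnNhd hU
  have hpow : Differentiable ℂ fun s : ℂ => (2 : ℂ) ^ (1 - s) :=
    ((differentiable_const 1).sub differentiable_id).const_cpow (.inl two_ne_zero)
  have hG : AnalyticOnNhd ℂ (fun s => (1 - 2 ^ (1 - s)) * riemannZeta₁ s) {s | 0 < s.re} :=
    (((differentiable_const 1).sub hpow).mul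
      differentiable_riemannZeta₁).differentiableOn.analyticOnNhd hU
  have hFG : (fun s => (s - 1) * dirichletEta s) =ᶠ[𝓝 2]
      fun s => (1 - 2 ^ (1 - s)) * riemannZeta₁ s := by
    filter_upwards [(isOpen_lt continuous_const continuous_re).mem_nhds
      (show (2 : ℂ) ∈ {s : ℂ | 1 < s.re} by norm_num)] with s (hs : 1 < s.re)
    have hs₁ : s - 1 ≠ 0 := sub_ne_zero.2 (by rintro rfl; simp at hs)
    rw [dirichletEta_eq_of_one_lt hs, riemannZeta_eq_inv_sub_mul (sub_ne_zero.1 hs₁)]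
    field_simp
  have := hF.eqOn_of_preconnected_of_eventuallyEq hG (convex_halfSpace_re_gt 0).isPreconnected
    (show (2 : ℂ) ∈ {s : ℂ | 0 < s.re} by norm_num) hFG hs
  rw [riemannZeta_eq_inv_sub_mul hs₁]
  field_simp [sub_ne_zero.2 hs₁]
  linear_combination this

theorem tendsto_sum_etaTerm_zero_of_riemannZeta_eq_zero (hs : 0 < s.re) (hζ : riemannZeta s = 0) :
    Tendsto (fun N => ∑ n ∈ range N, etaTerm s n) atTop (𝓝 0) := by
  have hs₁ : s ≠ 1 := by rintro rfl; exact riemannZeta_one_ne_zero hζ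
  simpa [dirichletEta_eq hs hs₁, hζ] using tendsto_sum_etaTerm hs

end

theorem stmt_7 (z : ℂ) (h0 : 0 < z.re) (h1 : z.re < 1) (hz : riemannZeta z = 0) :
    ∃ L : ℂ,
      Tendsto (fun N : ℕ => ∑ n ∈ Finset.range N,
          (-1 : ℂ) ^ n / ((n : ℂ) + 1) ^ (starRingEnd ℂ z)) atTop (nhds L) ∧
      Tendsto (fun N : ℕ => ∑ n ∈ Finset.range N,
          (-1 : ℂ) ^ n / ((n : ℂ) + 1) ^ ((1 : ℂ) - z)) atTop (nhds L) := by
  have hz₁ : z ≠ 1 := by rintro rfl; simp at h1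
  have hz_nat (n : ℕ) : z ≠ -n := by
    rintro rfl
    simp only [neg_re, natCast_re] at h0
    linarith [n.cast_nonneg (α := ℝ)]
  refine ⟨0, tendsto_sum_etaTerm_zero_of_riemannZeta_eq_zero (by simpa using h0) ?_,
    tendsto_sum_etaTerm_zero_of_riemannZeta_eq_zero (by simpa using h1) ?_⟩
  · rw [riemannZeta_conj, hz, map_zero]
  · rw [riemannZeta_one_sub hz_nat hz₁, hz, mul_zero]
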